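/- Let G be a profinite group. The poset of closed subgroups of G (ordered by inclusion) is directly decomposable if and only if the lattice of open subgroups of G is directly decomposable. -/

import Mathlib

/-!
In a profinite group an open subgroup has finite index, so only finitely many closed subgroups
contain it; conversely every closed subgroup is the intersection of the open subgroups containing
it, so one with only finitely many closed supergroups is a finite intersection of open subgroups,
hence open. Thus the open subgroups are the closed subgroups with a finite up-set. By compactness a
filter of open subgroups consists of all open subgroups containing its intersection, so the closed
subgroups are, order-dually, the filters of the lattice of open subgroups.

Both constructions, "elements with a finite up-set" and "filters", commute with direct products,
which transports a decomposition in either direction. Filters of a nontrivial poset are nontrivial;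
for the elements with a finite up-set, nontriviality of a factor comes from the fact that every
proper closed subgroup lies in a proper open subgroup.
-/

universe u

/-- A poset is directly decomposable if it is order-isomorphic to the product of two
partially ordered sets each having at least two elements. -/
def DirectlyDecomposable (P : Type u) [PartialOrder P] : Prop :=
  ∃ (α β : Type u) (_ : PartialOrder α) (_ : PartialOrder β),
    Nontrivial α ∧ Nontrivial β ∧ Nonempty (P ≃o α × β)

open Set Order

section FiniteIci

abbrev FiniteIci (P : Type*) [Preorder P] : Type _ := {a : P // (Ici a).Finite}

variable {P Q α β : Type*}

lemma OrderIso.finite_Ici_iff [Preorder P] [Preorder Q] (e : P ≃o Q) {a : P} :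
    (Ici (e a)).Finite ↔ (Ici a).Finite := by
  rw [← e.image_Ici, finite_image_iff e.injective.injOn]

def OrderIso.finiteIci [Preorder P] [Preorder Q] (e : P ≃o Q) : FiniteIci P ≃o FiniteIci Q where
  toEquiv := e.toEquiv.subtypeEquiv fun _ => e.finite_Ici_iff.symm
  map_rel_iff' := e.le_iff_le

variable [Preorder α] [Preorder β]

lemma Prod.finite_Ici_iff {p : α × β} :
    (Ici p).Finite ↔ (Ici p.1).Finite ∧ (Ici p.2).Finite := by
  rw [Ici_prod_eq]
  exact ⟨fun h => ⟨h.of_prod_left nonempty_Ici, h.of_prod_right nonempty_Ici⟩,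
    fun h => h.1.prod h.2⟩

def FiniteIci.prodEquiv : FiniteIci (α × β) ≃o FiniteIci α × FiniteIci β where
  toEquiv := (Equiv.subtypeEquivRight fun _ => Prod.finite_Ici_iff).trans
    (Equiv.subtypeProdEquivProd (p := fun a : α => (Ici a).Finite)
      (q := fun b : β => (Ici b).Finite))
  map_rel_iff' := Iff.rfl

lemma FiniteIci.nontrivial_of_orderIso_prod [PartialOrder P] [OrderTop P] [Nontrivial α]
    (e : P ≃o α × β) (h : ∀ x ≠ (⊤ : P), ∃ y ≠ ⊤, x ≤ y ∧ (Ici y).Finite) :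
    Nontrivial (FiniteIci α) := by
  have finite_fst {z : P} (hz : (Ici z).Finite) : (Ici (e z).1).Finite :=
    (Prod.finite_Ici_iff.mp (e.finite_Ici_iff.mpr hz)).1
  obtain ⟨a, ha⟩ := exists_ne (e ⊤).1
  obtain ⟨y, hy, hay, hy_fin⟩ :=
    h (e.symm (a, (e ⊤).2)) fun h' => ha (by rw [← h', e.apply_symm_apply])
  -- `e y` and `e ⊤` agree in the second coordinate, so they must differ in the first.
  have hey : (e ⊤).2 ≤ (e y).2 := (e.symm_apply_le.mp hay).2
  refine ⟨⟨(e y).1, finite_fst hy_fin⟩, ⟨(e ⊤).1, finite_fst (by simp)⟩,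
    fun h' => hy (top_le_iff.mp ?_)⟩
  exact e.le_iff_le.mp ⟨(congrArg Subtype.val h').ge, hey⟩

end FiniteIci

namespace Order.PFilter

variable {P Q α β : Type*} [Preorder P] [Preorder Q] [Preorder α] [Preorder β]

def comap (e : P ≃o Q) (F : PFilter Q) : PFilter P :=
  IsPFilter.toPFilter (F := e ⁻¹' F) <| .of_def
    (let ⟨x, hx⟩ := F.nonempty; ⟨e.symm x, by simpa using hx⟩)
    (fun x hx y hy =>
      let ⟨z, hz, hxz, hyz⟩ := F.directed _ hx _ hy
      ⟨e.symm z, by simpa using hz, e.symm_apply_le.mpr hxz, e.symm_apply_le.mpr hyz⟩)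
    (fun hxy hx => F.mem_of_le (e.monotone hxy) hx)

@[simp]
lemma mem_comap {e : P ≃o Q} {F : PFilter Q} {x : P} : x ∈ comap e F ↔ e x ∈ F := Iff.rfl

def congr (e : P ≃o Q) : PFilter P ≃o PFilter Q :=
  Equiv.toOrderIso
    { toFun := comap e.symm
      invFun := comap e
      left_inv := fun F => SetLike.coe_injective (by ext; simp)
      right_inv := fun F => SetLike.coe_injective (by ext; simp) }
    (fun _ _ h _ hx => h hx) (fun _ _ h _ hx => h hx)

def fst (F : PFilter (α × β)) : PFilter α :=
  IsPFilter.toPFilter (F := Prod.fst '' (F : Set (α × β))) <| by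
    refine .of_def (F.nonempty.image _) (DirectedOn.fst (r₂ := (· ≥ ·)) F.directed) ?_
    rintro x y hxy ⟨p, hp, rfl⟩
    exact ⟨(y, p.2), F.mem_of_le (show p ≤ (y, p.2) from ⟨hxy, le_rfl⟩) hp, rfl⟩

def snd (F : PFilter (α × β)) : PFilter β :=
  IsPFilter.toPFilter (F := Prod.snd '' (F : Set (α × β))) <| by
    refine .of_def (F.nonempty.image _) (DirectedOn.snd (r := (· ≥ ·)) F.directed) ?_
    rintro x y hxy ⟨p, hp, rfl⟩
    exact ⟨(p.1, y), F.mem_of_le (show p ≤ (p.1, y) from ⟨le_rfl, hxy⟩) hp, rfl⟩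

def prod (F₁ : PFilter α) (F₂ : PFilter β) : PFilter (α × β) :=
  IsPFilter.toPFilter (F := (F₁ : Set α) ×ˢ F₂) <| .of_def (F₁.nonempty.prod F₂.nonempty)
    (F₁.directed.prod F₂.directed)
    (fun hxy hx => ⟨F₁.mem_of_le hxy.1 hx.1, F₂.mem_of_le hxy.2 hx.2⟩)

@[simp] lemma coe_fst (F : PFilter (α × β)) : (F.fst : Set α) = Prod.fst '' (F : Set (α × β)) :=
  rfl

@[simp] lemma coe_snd (F : PFilter (α × β)) : (F.snd : Set β) = Prod.snd '' (F : Set (α × β)) :=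
  rfl

@[simp] lemma coe_prod (F₁ : PFilter α) (F₂ : PFilter β) :
    (prod F₁ F₂ : Set (α × β)) = (F₁ : Set α) ×ˢ F₂ := rfl

lemma prod_fst_snd (F : PFilter (α × β)) : prod F.fst F.snd = F := by
  refine SetLike.coe_injective (Set.ext fun p => ?_)
  simp only [coe_prod, coe_fst, coe_snd, mem_prod]
  refine ⟨?_, fun hp => ⟨⟨p, hp, rfl⟩, ⟨p, hp, rfl⟩⟩⟩
  rintro ⟨⟨q, hq, hqp⟩, ⟨r, hr, hrp⟩⟩
  obtain ⟨s, hs, hsq, hsr⟩ := F.directed _ hq _ hr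
  exact F.mem_of_le (show s ≤ p from ⟨hqp ▸ hsq.1, hrp ▸ hsr.2⟩) hs

def prodEquiv : PFilter (α × β) ≃o PFilter α × PFilter β :=
  Equiv.toOrderIso
    { toFun := fun F => (F.fst, F.snd)
      invFun := fun F => prod F.1 F.2
      left_inv := prod_fst_snd
      right_inv := fun ⟨F₁, F₂⟩ => Prod.ext
        (SetLike.coe_injective <| by simp [fst_image_prod _ F₂.nonempty])
        (SetLike.coe_injective <| by simp [snd_image_prod F₁.nonempty]) }
    (fun F F' h => Prod.mk_le_mk.mpr
      ⟨SetLike.coe_subset_coe.mp (by simpa using image_mono (f := Prod.fst) h),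
        SetLike.coe_subset_coe.mp (by simpa using image_mono (f := Prod.snd) h)⟩)
    (fun F F' h => SetLike.coe_subset_coe.mp (by simpa using prod_mono h.1 h.2))

instance {P : Type*} [PartialOrder P] [Nontrivial P] : Nontrivial (PFilter P) :=
  Function.Injective.nontrivial (f := principal) fun _ _ h =>
    le_antisymm (principal_le_principal_iff.mp h.ge) (principal_le_principal_iff.mp h.le)

end Order.PFilter

def OrderIso.dualProd (α β : Type*) [LE α] [LE β] : (α × β)ᵒᵈ ≃o αᵒᵈ × βᵒᵈ where
  toEquiv := Equiv.refl _
  map_rel_iff' := Iff.rfl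

lemma Subgroup.finite_Ici_of_finite_quotient {G : Type*} [Group G] (H : Subgroup G)
    [Finite (G ⧸ H)] : (Ici H).Finite := by
  refine Finite.of_finite_image (f := fun K : Subgroup G => QuotientGroup.mk '' (K : Set G))
    (toFinite (_ : Set (Set (G ⧸ H)))) fun K₁ hK₁ K₂ hK₂ h => ?_
  suffices ∀ ⦃K L : Subgroup G⦄, H ≤ L →
      QuotientGroup.mk '' (K : Set G) ⊆ QuotientGroup.mk '' (L : Set G) → K ≤ L from
    le_antisymm (this hK₂ h.le) (this hK₁ h.ge)
  intro K L hHL hKL x hx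
  obtain ⟨y, hy, hyx⟩ := hKL ⟨x, hx, rfl⟩
  simpa using L.mul_mem hy (hHL (QuotientGroup.eq.mp hyx))

section ProfiniteGroup

variable (G : Type*) [Group G] [TopologicalSpace G]

abbrev ClosedSubgroups : Type _ := {X : Subgroup G // IsClosed (X : Set G)}

abbrev OpenSubgroups : Type _ := {X : Subgroup G // IsOpen (X : Set G)}

variable {G}

instance : OrderTop (ClosedSubgroups G) := Subtype.orderTop isClosed_univ

def ClosedSubgroups.openSupergroups (H : ClosedSubgroups G) : PFilter (OpenSubgroups G) :=
  IsPFilter.toPFilter (F := {U | H.1 ≤ U.1}) <| .of_def ⟨⟨⊤, isOpen_univ⟩, show H.1 ≤ ⊤ from le_top⟩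
    (fun U hU V hV => ⟨⟨U.1 ⊓ V.1, U.2.inter V.2⟩, show H.1 ≤ U.1 ⊓ V.1 from le_inf hU hV,
      Subtype.coe_le_coe.mp inf_le_left, Subtype.coe_le_coe.mp inf_le_right⟩)
    (fun {_ V} hUV hU => show H.1 ≤ V.1 from le_trans hU hUV)

@[simp]
lemma ClosedSubgroups.mem_openSupergroups {H : ClosedSubgroups G} {U : OpenSubgroups G} :
    U ∈ H.openSupergroups ↔ H.1 ≤ U.1 := Iff.rfl

lemma ClosedSubgroups.openSupergroups_antitone :
    Antitone (openSupergroups : ClosedSubgroups G → PFilter (OpenSubgroups G)) :=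
  fun _ _ hHK _ hU => le_trans (α := Subgroup G) hHK hU

variable [IsTopologicalGroup G]

def OpenSubgroups.sInfPFilter (F : PFilter (OpenSubgroups G)) : ClosedSubgroups G :=
  ⟨sInf (Subtype.val '' (F : Set (OpenSubgroups G))), by
    rw [Subgroup.coe_sInf]
    exact isClosed_biInter fun _ ⟨U, _, hU⟩ => hU ▸ U.1.isClosed_of_isOpen U.2⟩

lemma OpenSubgroups.sInfPFilter_antitone :
    Antitone (sInfPFilter : PFilter (OpenSubgroups G) → ClosedSubgroups G) :=
  fun _ _ h => Subtype.coe_le_coe.mp (sInf_le_sInf (image_mono (f := Subtype.val) h))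

variable [CompactSpace G]

lemma ClosedSubgroups.finite_Ici_of_isOpen (H : ClosedSubgroups G) (hH : IsOpen (H.1 : Set G)) :
    (Ici H).Finite :=
  have := Subgroup.quotient_finite_of_isOpen H.1 hH
  (H.1.finite_Ici_of_finite_quotient.preimage Subtype.val_injective.injOn).subset fun _ h => h

lemma OpenSubgroups.mem_of_sInf_le (F : PFilter (OpenSubgroups G)) {U : OpenSubgroups G}
    (hU : sInf (Subtype.val '' (F : Set (OpenSubgroups G))) ≤ U.1) : U ∈ F := by
  have : Nonempty F := F.nonempty.to_subtype
  have hdir : Directed (· ⊇ ·) fun V : F => (V.1.1 : Set G) := fun V W =>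
    let ⟨Z, hZ, hZV, hZW⟩ := F.directed _ V.2 _ W.2
    ⟨⟨Z, hZ⟩, hZV, hZW⟩
  have hinter : ⋂ V : F, (V.1.1 : Set G) ⊆ U.1 := fun x hx => hU <| Subgroup.mem_sInf.mpr <| by
    rintro _ ⟨V, hV, rfl⟩
    exact mem_iInter.mp hx ⟨V, hV⟩
  obtain ⟨V, hVU⟩ := exists_subset_nhds_of_isCompact' hdir
    (fun V => (V.1.1.isClosed_of_isOpen V.1.2).isCompact)
    (fun V => V.1.1.isClosed_of_isOpen V.1.2) fun x hx => U.2.mem_nhds (hinter hx)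
  exact F.mem_of_le (show V.1 ≤ U from hVU) V.2

lemma OpenSubgroups.openSupergroups_sInfPFilter (F : PFilter (OpenSubgroups G)) :
    (sInfPFilter F).openSupergroups = F :=
  SetLike.coe_injective <| Set.ext fun _ =>
    ⟨mem_of_sInf_le F, fun hU => sInf_le (mem_image_of_mem Subtype.val hU)⟩

variable [TotallyDisconnectedSpace G]

lemma Subgroup.sInf_isOpen_supergroups {H : Subgroup G} (hH : IsClosed (H : Set G)) :
    sInf {U : Subgroup G | IsOpen (U : Set G) ∧ H ≤ U} = H :=
  (ProfiniteGrp.closedSubgroup_eq_sInf_open ⟨H, hH⟩).symm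

lemma ClosedSubgroups.isOpen_of_finite_Ici (H : ClosedSubgroups G) (hH : (Ici H).Finite) :
    IsOpen (H.1 : Set G) := by
  have hfin : {U : Subgroup G | IsOpen (U : Set G) ∧ H.1 ≤ U}.Finite :=
    (hH.image Subtype.val).subset fun U hU => ⟨⟨U, U.isClosed_of_isOpen hU.1⟩, hU.2, rfl⟩
  rw [← Subgroup.sInf_isOpen_supergroups H.2, Subgroup.coe_sInf]
  exact hfin.isOpen_biInter fun U hU => hU.1

lemma ClosedSubgroups.exists_isOpen_ge_ne_top (H : ClosedSubgroups G) (hH : H ≠ ⊤) :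
    ∃ U : ClosedSubgroups G, U ≠ ⊤ ∧ H ≤ U ∧ IsOpen (U.1 : Set G) := by
  by_contra! h
  refine hH (Subtype.ext ?_)
  change H.1 = ⊤
  rw [← Subgroup.sInf_isOpen_supergroups H.2, sInf_eq_top]
  exact fun U hU => by_contra fun hU_top =>
    h ⟨U, U.isClosed_of_isOpen hU.1⟩ (mt (congrArg Subtype.val) hU_top) hU.2 hU.1

lemma ClosedSubgroups.sInfPFilter_openSupergroups (H : ClosedSubgroups G) :
    OpenSubgroups.sInfPFilter H.openSupergroups = H := by
  refine Subtype.ext <| (congrArg sInf ?_).trans (Subgroup.sInf_isOpen_supergroups H.2)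
  ext U
  simp only [SetLike.mem_coe, mem_openSupergroups, mem_image, mem_ofPred_eq]
  exact ⟨fun ⟨V, hV, hVU⟩ => hVU ▸ ⟨V.2, hV⟩, fun hU => ⟨⟨U, hU.1⟩, hU.2, rfl⟩⟩

def openSubgroupsEquivFiniteIci : OpenSubgroups G ≃o FiniteIci (ClosedSubgroups G) where
  toFun U := ⟨⟨U.1, U.1.isClosed_of_isOpen U.2⟩, ClosedSubgroups.finite_Ici_of_isOpen _ U.2⟩
  invFun H := ⟨H.1.1, H.1.isOpen_of_finite_Ici H.2⟩
  left_inv _ := rfl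
  right_inv _ := rfl
  map_rel_iff' := Iff.rfl

def closedSubgroupsEquivPFilter : ClosedSubgroups G ≃o (PFilter (OpenSubgroups G))ᵒᵈ :=
  Equiv.toOrderIso
    { toFun := fun H => OrderDual.toDual H.openSupergroups
      invFun := fun F => OpenSubgroups.sInfPFilter (OrderDual.ofDual F)
      left_inv := ClosedSubgroups.sInfPFilter_openSupergroups
      right_inv := OpenSubgroups.openSupergroups_sInfPFilter }
    ClosedSubgroups.openSupergroups_antitone.dual_right OpenSubgroups.sInfPFilter_antitone.dual_left

end ProfiniteGroup

theorem closed_directlyDecomposable_iff_open_directlyDecomposable_general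
    {G : Type u} [Group G] [TopologicalSpace G] [IsTopologicalGroup G]
    [CompactSpace G] [TotallyDisconnectedSpace G] :
    DirectlyDecomposable {X : Subgroup G // IsClosed (X : Set G)} ↔
      DirectlyDecomposable {X : Subgroup G // IsOpen (X : Set G)} := by
  have below_open : ∀ H : ClosedSubgroups G, H ≠ ⊤ → ∃ U ≠ ⊤, H ≤ U ∧ (Ici U).Finite :=
    fun H hH =>
      let ⟨U, hU, hHU, hU_open⟩ := H.exists_isOpen_ge_ne_top hH
      ⟨U, hU, hHU, U.finite_Ici_of_isOpen hU_open⟩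
  constructor
  · rintro ⟨α, β, _, _, _, _, ⟨e⟩⟩
    exact ⟨FiniteIci α, FiniteIci β, _, _, FiniteIci.nontrivial_of_orderIso_prod e below_open,
      FiniteIci.nontrivial_of_orderIso_prod (e.trans OrderIso.prodComm) below_open,
      ⟨openSubgroupsEquivFiniteIci.trans (e.finiteIci.trans FiniteIci.prodEquiv)⟩⟩
  · rintro ⟨α, β, _, _, _, _, ⟨e⟩⟩
    exact ⟨(PFilter α)ᵒᵈ, (PFilter β)ᵒᵈ, _, _, inferInstance, inferInstance,
      ⟨closedSubgroupsEquivPFilter.trans ((PFilter.congr e).dual.trans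
        (PFilter.prodEquiv.dual.trans (OrderIso.dualProd _ _)))⟩⟩

/-- For a profinite group `G`, the poset of closed subgroups of `G` is
directly decomposable iff the lattice of open subgroups of `G` is directly decomposable. -/
theorem closed_directlyDecomposable_iff_open_directlyDecomposable
    {G : Type u} [Group G] [TopologicalSpace G] [IsTopologicalGroup G]
    [CompactSpace G] [T2Space G] [TotallyDisconnectedSpace G] :
    DirectlyDecomposable {X : Subgroup G // IsClosed (X : Set G)} ↔
      DirectlyDecomposable {X : Subgroup G // IsOpen (X : Set G)} :=
  closed_directlyDecomposable_iff_open_directlyDecomposable_general
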